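/- arXiv:0906.3600 — 2 statements merged into one kernel-verified Lean document; each statement's English description precedes it below -/
import Mathlib

section
/- Let J be a positive integer, let Y_1, …, Y_J ∈ L²_P(Ω) be pairwise uncorrelated random variables with zero mean, and let g_1, …, g_J : ℝ → ℝ be functions with g_j(λ) > 0 for all j at a given λ ∈ ℝ. Let Y^λ := Σ_{j=1}^J g_j(λ) Y_j and let Z^λ be a square-integrable random variable with Z^λ − E[Z^λ] = Y^λ. Then for any positive integer N, any real coefficients a_1, …, a_N and any parameter values λ_1, …, λ_N ∈ ℝ, setting Y_N := Σ_{n=1}^N a_n Y^{λ_n}, one has Var(Z^λ − Y_N) ≤ (Σ_{j=1}^J g_j(λ)² Var(Y_j)) · max_{1≤j≤J} (g_j(λ) − Σ_{n=1}^N a_n g_j(λ_n))² / g_j(λ)². -/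
open MeasureTheory

/-- Covariance of two real random variables: `Cov(X,Y) = E[XY] - E[X]E[Y]`. -/
noncomputable def cov {Ω : Type*} [MeasurableSpace Ω] (P : Measure Ω) (X Y : Ω → ℝ) : ℝ :=
  (∫ ω, X ω * Y ω ∂P) - (∫ ω, X ω ∂P) * (∫ ω, Y ω ∂P)

/-- For `Y^λ = ∑_j g_j(λ) Y_j` with pairwise uncorrelated zero-mean `Y_j`,
`g_j(λ) > 0`, and `Z^λ - E[Z^λ] = Y^λ`, the residual variance of the
control variate `Y_N = ∑_n a_n Y^{λ_n}` is bounded by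
`(∑_j g_j(λ)² Var(Y_j)) · max_j (g_j(λ) - ∑_n a_n g_j(λ_n))² / g_j(λ)²`. -/
theorem variance_residual_control_variate_le
    {Ω : Type*} [MeasurableSpace Ω] (P : Measure Ω) [IsProbabilityMeasure P]
    (J N : ℕ) (hJ : 0 < J) (hN : 0 < N)
    (Y : Fin J → Ω → ℝ)
    (hY : ∀ j, MemLp (Y j) 2 P)
    (hmean : ∀ j, (∫ ω, Y j ω ∂P) = 0)
    (huncorr : ∀ i j, i ≠ j → cov P (Y i) (Y j) = 0)
    (g : Fin J → ℝ → ℝ) (l : ℝ)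
    (hgpos : ∀ j, 0 < g j l)
    (Z : ℝ → Ω → ℝ)
    (hZ : ∀ l', MemLp (Z l') 2 P)
    (hZY : ∀ l' ω, Z l' ω - (∫ x, Z l' x ∂P) = ∑ j, g j l' * Y j ω)
    (a : Fin N → ℝ) (lam : Fin N → ℝ) :
    ProbabilityTheory.variance
        (fun ω => Z l ω - ∑ n, a n * ∑ j, g j (lam n) * Y j ω) P
      ≤ (∑ j, (g j l) ^ 2 * ProbabilityTheory.variance (Y j) P)
        * ⨆ j : Fin J, (g j l - ∑ n, a n * g j (lam n)) ^ 2 / (g j l) ^ 2 := by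

  classical
  haveI : Nonempty (Fin J) := Fin.pos_iff_nonempty.mp hJ
  set c : Fin J → ℝ := fun j => g j l - ∑ n, a n * g j (lam n) with hc
  set C : ℝ := ∫ x, Z l x ∂P with hC
  set W : Ω → ℝ := fun ω => ∑ j, c j * Y j ω with hW
  -- product integrability
  have hmul : ∀ i j : Fin J, Integrable (fun ω => Y i ω * Y j ω) P := by
    intro i j
    have h : MemLp (Y i • Y j) 1 P :=
      (hY j).smul (hY i) (hpqr := ⟨by
        rw [inv_one]; exact ENNReal.inv_two_add_inv_two⟩)
    exact h.integrable le_rfl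
  have hYint : ∀ j : Fin J, Integrable (Y j) P := fun j => (hY j).integrable one_le_two
  -- pointwise identity
  have key : (fun ω => Z l ω - ∑ n, a n * ∑ j, g j (lam n) * Y j ω)
      = fun ω => C + W ω := by
    funext ω
    have h1 := hZY l ω
    have h2 : ∑ n, a n * ∑ j, g j (lam n) * Y j ω
        = ∑ j, (∑ n, a n * g j (lam n)) * Y j ω := by
      simp_rw [Finset.mul_sum, Finset.sum_mul]
      rw [Finset.sum_comm]
      congr 1; funext j; congr 1; funext n; ring
    have h3 : W ω = (∑ j, g j l * Y j ω) - ∑ j, (∑ n, a n * g j (lam n)) * Y j ω := by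
      rw [← Finset.sum_sub_distrib]
      refine Finset.sum_congr rfl fun j _ => ?_
      simp [hc, sub_mul]
    rw [h2, h3]
    linarith
  rw [key]
  -- MemLp facts
  have hWmem : MemLp W 2 P := by
    exact memLp_finsetSum _ fun j _ => (hY j).const_mul (c j)
  have hWint : Integrable W P := hWmem.integrable one_le_two
  have hCWmem : MemLp (fun ω => C + W ω) 2 P := (memLp_const C).add hWmem
  -- mean of W is zero
  have hWmean : (∫ ω, W ω ∂P) = 0 := by
    rw [hW, integral_finset_sum _ (fun j _ => (hYint j).const_mul (c j))]
    simp [integral_const_mul, hmean]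
  -- second moment of W
  have hWsq : (∫ ω, W ω ^ 2 ∂P) = ∑ j, c j ^ 2 * ∫ ω, Y j ω ^ 2 ∂P := by
    have hexp : ∀ ω, W ω ^ 2 = ∑ i, ∑ j, (c i * c j) * (Y i ω * Y j ω) := by
      intro ω
      rw [sq, hW, Finset.sum_mul_sum]
      refine Finset.sum_congr rfl fun i _ => Finset.sum_congr rfl fun j _ => ?_
      ring
    simp_rw [hexp]
    rw [integral_finset_sum _ (fun i _ => integrable_finset_sum _
      (fun j _ => (hmul i j).const_mul _))]
    have : ∀ i : Fin J, (∫ ω, ∑ j, (c i * c j) * (Y i ω * Y j ω) ∂P)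
        = c i ^ 2 * ∫ ω, Y i ω ^ 2 ∂P := by
      intro i
      rw [integral_finset_sum _ (fun j _ => (hmul i j).const_mul _)]
      have hterm : ∀ j : Fin J, (∫ ω, (c i * c j) * (Y i ω * Y j ω) ∂P)
          = (c i * c j) * ∫ ω, Y i ω * Y j ω ∂P := fun j => integral_const_mul _ _
      rw [Finset.sum_eq_single i]
      · rw [hterm i]; simp_rw [← sq]
      · intro j _ hji
        rw [hterm j]
        have h0 : (∫ ω, Y i ω * Y j ω ∂P) = 0 := by
          simpa [cov, hmean i, hmean j] using huncorr i j (Ne.symm hji)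
        rw [h0, mul_zero]
      · intro h; exact absurd (Finset.mem_univ i) h
    exact Finset.sum_congr rfl fun i _ => this i
  -- variance of C + W equals second moment of W
  have hvar : ProbabilityTheory.variance (fun ω => C + W ω) P
      = ∑ j, c j ^ 2 * ∫ ω, Y j ω ^ 2 ∂P := by
    rw [ProbabilityTheory.variance_eq_sub hCWmem]
    have hsq : (∫ ω, (C + W ω) ^ 2 ∂P) = C ^ 2 + ∫ ω, W ω ^ 2 ∂P := by
      have : ∀ ω, (C + W ω) ^ 2 = C ^ 2 + ((2 * C) * W ω + W ω ^ 2) := by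
        intro ω; ring
      simp_rw [this]
      have hint1 : Integrable (fun ω => 2 * C * W ω) P := hWint.const_mul _
      have hint2 : Integrable (fun ω => 2 * C * W ω + W ω ^ 2) P :=
        hint1.add hWmem.integrable_sq
      rw [integral_add (integrable_const _) hint2, integral_add hint1 hWmem.integrable_sq,
        integral_const_mul, hWmean]
      simp
    have hm : (∫ ω, (C + W ω) ∂P) = C := by
      rw [integral_add (integrable_const _) hWint, hWmean]
      simp
    simp only [Pi.pow_apply]
    rw [hsq, hm, hWsq]
    ring
  rw [hvar]
  -- variance of Y j equals second moment
  have hvarY : ∀ j : Fin J, ProbabilityTheory.variance (Y j) P = ∫ ω, Y j ω ^ 2 ∂P := by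
    intro j
    rw [ProbabilityTheory.variance_eq_sub (hY j), hmean j]
    simp
  -- final bound
  have hle : ∀ j : Fin J, c j ^ 2 / (g j l) ^ 2
      ≤ ⨆ j : Fin J, (g j l - ∑ n, a n * g j (lam n)) ^ 2 / (g j l) ^ 2 := by
    intro j
    exact le_ciSup (f := fun j : Fin J =>
      (g j l - ∑ n, a n * g j (lam n)) ^ 2 / (g j l) ^ 2)
      (Set.Finite.bddAbove (Set.finite_range _)) j
  rw [Finset.sum_mul]
  refine Finset.sum_le_sum fun j _ => ?_
  have hg : (g j l) ^ 2 ≠ 0 := pow_ne_zero 2 (hgpos j).ne'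
  have hI : 0 ≤ ∫ ω, Y j ω ^ 2 ∂P := integral_nonneg fun ω => sq_nonneg _
  have : c j ^ 2 * (∫ ω, Y j ω ^ 2 ∂P)
      = (g j l) ^ 2 * (∫ ω, Y j ω ^ 2 ∂P) * (c j ^ 2 / (g j l) ^ 2) := by
    field_simp
    rw [mul_div_assoc, div_self (hgpos j).ne', mul_one]
  rw [this, hvarY j]
  exact mul_le_mul_of_nonneg_left (hle j)
    (mul_nonneg (sq_nonneg _) hI)
end

section
/- Let C > 0 and L > 0 be real numbers and let N be an integer with N − 1 ≥ e·C·L, where e is Euler's number. Set M := 1 + ⌊(N−1)/(e·C·L)⌋ and d := (M−1)·L/(N−1). Then C·d ≤ 1/e and (C·d)^{2M} ≤ exp(−2(N−1)/(e·C·L)). -/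
/-- For `C, L > 0` and an integer `N` with `N - 1 ≥ e·C·L`, setting
`M := 1 + ⌊(N-1)/(e·C·L)⌋` and `d := (M-1)·L/(N-1)`, one has `C·d ≤ 1/e` and
`(C·d)^(2M) ≤ exp(-2(N-1)/(e·C·L))`. -/
theorem floor_choice_bound
    (C L : ℝ) (hC : 0 < C) (hL : 0 < L)
    (N : ℤ) (hN : Real.exp 1 * C * L ≤ (N : ℝ) - 1)
    (M : ℕ) (hM : M = 1 + ⌊((N : ℝ) - 1) / (Real.exp 1 * C * L)⌋₊)
    (d : ℝ) (hd : d = ((M : ℝ) - 1) * L / ((N : ℝ) - 1)) :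
    C * d ≤ 1 / Real.exp 1
      ∧ (C * d) ^ (2 * M) ≤ Real.exp (-2 * ((N : ℝ) - 1) / (Real.exp 1 * C * L)) := by
  have hE : (0:ℝ) < Real.exp 1 := Real.exp_pos 1
  have hP : (0:ℝ) < Real.exp 1 * C * L := by positivity
  have hNpos : (0:ℝ) < (N : ℝ) - 1 := lt_of_lt_of_le hP hN
  set x : ℝ := ((N : ℝ) - 1) / (Real.exp 1 * C * L) with hx
  have hxpos : 0 < x := div_pos hNpos hP
  have hfloor_le : (⌊x⌋₊ : ℝ) ≤ x := Nat.floor_le hxpos.le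
  have hx_lt : x < (⌊x⌋₊ : ℝ) + 1 := Nat.lt_floor_add_one x
  have hM' : (M : ℝ) - 1 = (⌊x⌋₊ : ℝ) := by rw [hM]; push_cast; ring
  have hfloor_mul : (⌊x⌋₊ : ℝ) * (Real.exp 1 * C * L) ≤ (N : ℝ) - 1 := by
    have := hfloor_le
    rwa [hx, le_div_iff₀ hP] at this
  have key : C * d ≤ 1 / Real.exp 1 := by
    rw [hd, hM']
    have heq : C * ((⌊x⌋₊:ℝ) * L / ((N:ℝ)-1)) = C * (⌊x⌋₊:ℝ) * L / ((N:ℝ)-1) := by ring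
    rw [heq, div_le_div_iff₀ hNpos hE]
    nlinarith
  have hdnn : 0 ≤ C * d := by
    rw [hd, hM']; positivity
  refine ⟨key, ?_⟩
  calc (C * d) ^ (2 * M) ≤ (1 / Real.exp 1) ^ (2 * M) := pow_le_pow_left₀ hdnn key _
    _ = Real.exp (-(2 * M : ℕ)) := by
        rw [one_div, ← Real.exp_neg, ← Real.exp_nat_mul]
        push_cast
        ring_nf
    _ ≤ Real.exp (-2 * ((N : ℝ) - 1) / (Real.exp 1 * C * L)) := by
        apply Real.exp_le_exp.2
        have hxM : x ≤ (M : ℝ) := by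
          have : (M : ℝ) = (⌊x⌋₊ : ℝ) + 1 := by rw [hM]; push_cast; ring
          linarith
        have : -2 * ((N : ℝ) - 1) / (Real.exp 1 * C * L) = -2 * x := by
          rw [hx]; ring
        rw [this]
        push_cast
        linarith
end
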